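/- Let H₀ be a complex Hilbert space, B ∈ B(H₀) with 0 ≤ B ≤ I and ker B = ker(I−B) = {0}, H = H₀ ⊕ H₀, N = {(u, Bu) : u ∈ H₀} and M = {(u, −Bu) : u ∈ H₀}. Then for every T ∈ B(H) with ‖T‖ ≤ 1, TN ⊆ N and TM ⊆ M, and for all x₁, y₂ ∈ H₀, one has |⟨T(x₁, 0), (0, y₂)⟩| ≤ ‖Bx₁‖·‖By₂‖. -/

import Mathlib

noncomputable section

variable {H₀ : Type*} [NormedAddCommGroup H₀] [InnerProductSpace ℂ H₀] [CompleteSpace H₀]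

/-- The vector `(u, v) ∈ H₀ ⊕ H₀`. -/
def vec₂ (u v : H₀) : WithLp 2 (H₀ × H₀) := (WithLp.equiv 2 (H₀ × H₀)).symm (u, v)

/-- The subspace `N = {(u, Bu) : u ∈ H₀}` of `H₀ ⊕ H₀`. -/
def graphN (B : H₀ →L[ℂ] H₀) : Set (WithLp 2 (H₀ × H₀)) :=
  {p | (WithLp.equiv 2 (H₀ × H₀) p).2 = B (WithLp.equiv 2 (H₀ × H₀) p).1}

/-- The subspace `M = {(u, −Bu) : u ∈ H₀}` of `H₀ ⊕ H₀`. -/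
def graphM (B : H₀ →L[ℂ] H₀) : Set (WithLp 2 (H₀ × H₀)) :=
  {p | (WithLp.equiv 2 (H₀ × H₀) p).2 = -(B (WithLp.equiv 2 (H₀ × H₀) p).1)}

/-! `(x, 0)` and `(0, Bx)` are half the sum and half the difference of `(x, Bx) ∈ N` and
`(x, -Bx) ∈ M`, so invariance of `N` and `M` forces the second coordinate of `T(x, 0)` to be `Bw`,
where `w` is the first coordinate of `T(0, Bx)`. Hence `⟨T(x, 0), (0, y)⟩ = ⟨Bw, y⟩ = ⟨w, By⟩`,
and `‖w‖ ≤ ‖T(0, Bx)‖ ≤ ‖Bx‖` because `T` is a contraction. -/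

omit [InnerProductSpace ℂ H₀] [CompleteSpace H₀] in
lemma norm_vec₂_zero_left (v : H₀) : ‖vec₂ 0 v‖ = ‖v‖ := WithLp.norm_toLp_snd 2 H₀ H₀ v

omit [CompleteSpace H₀] in
lemma inner_vec₂_zero_left (p : WithLp 2 (H₀ × H₀)) (v : H₀) :
    inner ℂ p (vec₂ 0 v) = inner ℂ p.snd v := by
  rw [WithLp.prod_inner_apply]
  change inner ℂ p.fst 0 + inner ℂ p.snd v = _
  rw [inner_zero_right, zero_add]

omit [CompleteSpace H₀] in
lemma vec₂_zero_right_eq_half_add (u v : H₀) :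
    vec₂ u 0 = (2⁻¹ : ℂ) • (vec₂ u v + vec₂ u (-v)) := by
  apply WithLp.ofLp_injective 2
  simp only [vec₂, WithLp.equiv_symm_apply, WithLp.ofLp_add, WithLp.ofLp_smul, WithLp.ofLp_toLp,
    Prod.mk_add_mk, Prod.smul_mk, Prod.mk.injEq]
  constructor <;> module

omit [CompleteSpace H₀] in
lemma vec₂_zero_left_eq_half_sub (u v : H₀) :
    vec₂ 0 v = (2⁻¹ : ℂ) • (vec₂ u v - vec₂ u (-v)) := by
  apply WithLp.ofLp_injective 2
  simp only [vec₂, WithLp.equiv_symm_apply, WithLp.ofLp_sub, WithLp.ofLp_smul, WithLp.ofLp_toLp,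
    Prod.mk_sub_mk, Prod.smul_mk, Prod.mk.injEq]
  constructor <;> module

omit [CompleteSpace H₀] in
theorem snd_apply_vec₂_zero_right {B : H₀ →L[ℂ] H₀}
    {T : WithLp 2 (H₀ × H₀) →L[ℂ] WithLp 2 (H₀ × H₀)}
    (hTN : Set.MapsTo T (graphN B) (graphN B)) (hTM : Set.MapsTo T (graphM B) (graphM B))
    (u : H₀) : (T (vec₂ u 0)).snd = B (T (vec₂ 0 (B u))).fst := by
  have hN : (T (vec₂ u (B u))).snd = B (T (vec₂ u (B u))).fst := hTN rfl
  have hM : (T (vec₂ u (-B u))).snd = -B (T (vec₂ u (-B u))).fst := hTM rfl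
  rw [vec₂_zero_right_eq_half_add u (B u), vec₂_zero_left_eq_half_sub u (B u)]
  simp only [map_smul, map_add, map_sub, WithLp.smul_fst, WithLp.smul_snd, WithLp.add_snd,
    WithLp.sub_fst, hN, hM]
  module

theorem norms_of_vector_functionals_stmt19_general
    (B : H₀ →L[ℂ] H₀) (hBpos : B.IsPositive)
    (T : WithLp 2 (H₀ × H₀) →L[ℂ] WithLp 2 (H₀ × H₀)) (hT : ‖T‖ ≤ 1)
    (hTN : Set.MapsTo T (graphN B) (graphN B)) (hTM : Set.MapsTo T (graphM B) (graphM B))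
    (x₁ y₂ : H₀) :
    ‖(inner ℂ (T (vec₂ x₁ 0)) (vec₂ 0 y₂) : ℂ)‖ ≤ ‖B x₁‖ * ‖B y₂‖ := by
  set w := (T (vec₂ 0 (B x₁))).fst
  have hw : ‖w‖ ≤ ‖B x₁‖ := calc
    ‖w‖ ≤ ‖T (vec₂ 0 (B x₁))‖ := WithLp.norm_fst_le _ _
    _ ≤ ‖vec₂ 0 (B x₁)‖ := by simpa using T.le_of_opNorm_le hT _
    _ = ‖B x₁‖ := norm_vec₂_zero_left _
  calc ‖(inner ℂ (T (vec₂ x₁ 0)) (vec₂ 0 y₂) : ℂ)‖ = ‖(inner ℂ w (B y₂) : ℂ)‖ := by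
        rw [inner_vec₂_zero_left, snd_apply_vec₂_zero_right hTN hTM]
        exact congrArg norm (hBpos.isSymmetric _ _)
    _ ≤ ‖w‖ * ‖B y₂‖ := norm_inner_le_norm _ _
    _ ≤ ‖B x₁‖ * ‖B y₂‖ := by gcongr

/-- Let `B` be a positive contraction on `H₀` with
`ker B = ker (I−B) = {0}` and let `N = {(u, Bu)}`, `M = {(u, −Bu)}` in `H = H₀ ⊕ H₀`.
Then every contraction `T` on `H` leaving `N` and `M` invariant satisfies
`|⟨T(x₁, 0), (0, y₂)⟩| ≤ ‖Bx₁‖ · ‖By₂‖` for all `x₁, y₂ ∈ H₀`. -/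
theorem norms_of_vector_functionals_stmt19
    (B : H₀ →L[ℂ] H₀) (hBpos : B.IsPositive) (hB1 : ((1 : H₀ →L[ℂ] H₀) - B).IsPositive)
    (hkerB : LinearMap.ker (B : H₀ →ₗ[ℂ] H₀) = ⊥) (hker1B : LinearMap.ker (((1 : H₀ →L[ℂ] H₀) - B : H₀ →L[ℂ] H₀) : H₀ →ₗ[ℂ] H₀) = ⊥)
    (T : WithLp 2 (H₀ × H₀) →L[ℂ] WithLp 2 (H₀ × H₀)) (hT : ‖T‖ ≤ 1)
    (hTN : Set.MapsTo T (graphN B) (graphN B)) (hTM : Set.MapsTo T (graphM B) (graphM B))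
    (x₁ y₂ : H₀) :
    ‖(inner ℂ (T (vec₂ x₁ 0)) (vec₂ 0 y₂) : ℂ)‖ ≤ ‖B x₁‖ * ‖B y₂‖ :=
  norms_of_vector_functionals_stmt19_general B hBpos T hT hTN hTM x₁ y₂
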